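/- arXiv:nlin/0606049 — 2 statements merged into one kernel-verified Lean document; each statement's English description precedes it below -/
import Mathlib

section
/- Let κ₀ ≈ 0.149 be defined by the relation Ω₀ = (sqrt(7)/6)(1/4 + 16κ₀)^{-1/2} where Ω₀ = (sqrt(1 + 8·(14/81)) - 1)/2. Then κ₀ = (1/16)·(7/(36 Ω₀²) - 1/4), and the slope α_PT = 1/2 - 1/(16 κ₀) of the period-tripling bifurcation line m_PT(ω) = 1/8 + α_PT(ω² - 1/4) + O((ω²-1/4)²) satisfies 0 < α_PT < 1/2. -/
open Real

/-!
Solving `Ω = (√7/6)(1/4 + 16κ)^{-1/2}` for `κ` gives `1/4 + 16κ = 7/(36Ω²)`, so `κ₀` satisfies the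
defining relation as soon as `Ω₀ > 0`. The slope `1/2 - 1/(16κ₀)` lies in `(0, 1/2)` exactly when
`16κ₀ > 2`, i.e. `Ω₀² < 7/81`; this follows from `0 < Ω₀ < 5/18`, which reduces to `1 < √(193/81) < 14/9`.
-/

namespace PeriodTripling

noncomputable def kappaOfOmega (Ω : ℝ) : ℝ := (1 / 16) * (7 / (36 * Ω ^ 2) - 1 / 4)

lemma quarter_add_sixteen_kappaOfOmega {Ω : ℝ} (hΩ : Ω ≠ 0) :
    1 / 4 + 16 * kappaOfOmega Ω = (√7 / (6 * Ω)) ^ 2 := by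
  rw [kappaOfOmega, div_pow, sq_sqrt (by norm_num)]
  field_simp
  ring

lemma eq_div_sqrt_kappaOfOmega {Ω : ℝ} (hΩ : 0 < Ω) :
    Ω = (√7 / 6) / √(1 / 4 + 16 * kappaOfOmega Ω) := by
  rw [quarter_add_sixteen_kappaOfOmega hΩ.ne', sqrt_sq (by positivity)]
  field_simp

lemma two_lt_sixteen_kappaOfOmega {Ω : ℝ} (hΩ : 0 < Ω) (h : Ω ^ 2 < 7 / 81) :
    2 < 16 * kappaOfOmega Ω := by
  have : 9 / 4 < 7 / (36 * Ω ^ 2) := by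
    rw [lt_div_iff₀ (by positivity)]
    linarith
  rw [kappaOfOmega]
  linarith

lemma half_sub_inv_mem_Ioo {x : ℝ} (hx : 2 < x) : 0 < 1 / 2 - 1 / x ∧ 1 / 2 - 1 / x < 1 / 2 := by
  have hx₀ : 0 < x := by linarith
  refine ⟨?_, by linarith [one_div_pos.mpr hx₀]⟩
  rw [sub_pos, div_lt_div_iff₀ hx₀ two_pos]
  linarith

lemma omega₀_mem_Ioo :
    0 < (√(1 + 8 * (14 / 81)) - 1) / 2 ∧ (√(1 + 8 * (14 / 81)) - 1) / 2 < 5 / 18 := by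
  have hlower : 1 < √(1 + 8 * (14 / 81)) := by
    rw [lt_sqrt zero_le_one]
    norm_num
  have hupper : √(1 + 8 * (14 / 81)) < 14 / 9 := by
    rw [sqrt_lt' (by norm_num)]
    norm_num
  constructor <;> linarith

end PeriodTripling

open PeriodTripling

/-- With `Ω₀ = (√(1+8·(14/81))-1)/2` and `κ₀ = (1/16)(7/(36Ω₀²) - 1/4)`, the defining
relation `Ω₀ = (√7/6)(1/4+16κ₀)^{-1/2}` holds and the period-tripling slope
`α_PT = 1/2 - 1/(16κ₀)` satisfies `0 < α_PT < 1/2`. -/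
theorem period_tripling_slope :
    let Ω₀ : ℝ := (Real.sqrt (1 + 8 * (14 / 81)) - 1) / 2
    let κ₀ : ℝ := (1 / 16) * (7 / (36 * Ω₀ ^ 2) - 1 / 4)
    let αPT : ℝ := 1 / 2 - 1 / (16 * κ₀)
    Ω₀ = (Real.sqrt 7 / 6) / Real.sqrt (1 / 4 + 16 * κ₀) ∧ 0 < αPT ∧ αPT < 1 / 2 := by
  intro Ω₀ κ₀ αPT
  obtain ⟨hΩ₀_pos, hΩ₀_lt⟩ : 0 < Ω₀ ∧ Ω₀ < 5 / 18 := omega₀_mem_Ioo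
  have hΩ₀_sq : Ω₀ ^ 2 < 7 / 81 := by nlinarith
  exact ⟨eq_div_sqrt_kappaOfOmega hΩ₀_pos,
    half_sub_inv_mem_Ioo (two_lt_sixteen_kappaOfOmega hΩ₀_pos hΩ₀_sq)⟩
end

section
/- Consider the linear recurrence relations d_{n+1} + d_n = 0, b_{n+1} + b_n + 16 c_n = 0, a_{n+1} + a_n - (7/4) d_{n+1} = 0, c_{n+1} + c_n + (1/4) b_{n+1} = 0 on sequences indexed by integers n. A sequence (a_n, d_n, c_n, b_n) solving this system is bounded if and only if there exist real constants a and b such that (a_n, d_n, c_n, b_n) = a·((-1)^n, 0, 0, 0) + b·(0, 0, -1/8, 1) for all n. -/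
/-!
Twisting by `(-1)ⁿ` turns `d` into a constant sequence and `a` into an arithmetic progression
of step `(7/4) d₀`, while `b + 8c` is conserved and `b` is an arithmetic progression of step
`-2 (b₀ + 8c₀)` (the `(b, c)` block is a Jordan block with eigenvalue `1`). A bounded
arithmetic progression is constant, so boundedness forces `d₀ = 0` and `b₀ + 8c₀ = 0`.
-/

theorem eq_add_zsmul_of_forall_succ {G : Type*} [AddGroup G] {u : ℤ → G} {r : G}
    (h : ∀ n, u (n + 1) = u n + r) (n : ℤ) : u n = u 0 + n • r := by
  induction n using Int.induction_on with
  | zero => simp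
  | succ k ih => rw [h, ih, add_zsmul, one_zsmul, add_assoc]
  | pred k ih =>
    have hk := h (-k - 1)
    rw [sub_add_cancel] at hk
    rw [eq_sub_of_add_eq hk.symm, ih, sub_zsmul, one_zsmul, add_sub_assoc, sub_eq_add_neg]

theorem eq_apply_zero_of_forall_succ {α : Type*} {u : ℤ → α} (h : ∀ n, u (n + 1) = u n)
    (n : ℤ) : u n = u 0 := by
  induction n using Int.induction_on with
  | zero => rfl
  | succ k ih => rw [h, ih]
  | pred k ih => rw [← ih, ← h, sub_add_cancel]

theorem eq_zero_of_forall_succ_of_norm_le {E : Type*} [NormedAddCommGroup E] [NormedSpace ℝ E]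
    {u : ℤ → E} {r : E} (h : ∀ n, u (n + 1) = u n + r) {C : ℝ} (hC : ∀ n, ‖u n‖ ≤ C) :
    r = 0 := by
  by_contra hr
  obtain ⟨n, hn⟩ := exists_nat_gt (2 * C / ‖r‖)
  rw [div_lt_iff₀ (norm_pos_iff.2 hr)] at hn
  have hgap : ‖(n : ℤ) • r‖ ≤ 2 * C := calc
    ‖(n : ℤ) • r‖ = ‖u n - u 0‖ := by rw [eq_add_zsmul_of_forall_succ h n, add_sub_cancel_left]
    _ ≤ ‖u n‖ + ‖u 0‖ := norm_sub_le _ _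
    _ ≤ 2 * C := by linarith [hC n, hC 0]
  rw [norm_zsmul ℝ, Int.cast_natCast, Real.norm_natCast] at hgap
  linarith

theorem neg_one_zpow_mul_self {α : Type*} [DivisionRing α] (n : ℤ) :
    (-1 : α) ^ n * (-1 : α) ^ n = 1 := by
  rw [← zpow_add₀ (neg_ne_zero.2 one_ne_zero), Even.neg_one_zpow ⟨n, rfl⟩]

structure LinearizedRecurrence (a d c b : ℤ → ℝ) : Prop where
  d_succ : ∀ n : ℤ, d (n + 1) + d n = 0
  b_succ : ∀ n : ℤ, b (n + 1) + b n + 16 * c n = 0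
  a_succ : ∀ n : ℤ, a (n + 1) + a n - (7 / 4) * d (n + 1) = 0
  c_succ : ∀ n : ℤ, c (n + 1) + c n + (1 / 4) * b (n + 1) = 0

namespace LinearizedRecurrence

variable {a d c b : ℤ → ℝ}

theorem d_eq (hs : LinearizedRecurrence a d c b) (n : ℤ) : d n = (-1) ^ n * d 0 := by
  have hstep (k : ℤ) : (-1) ^ (k + 1) * d (k + 1) = (-1) ^ k * d k := by
    rw [zpow_add_one₀ (neg_ne_zero.2 one_ne_zero)]
    linear_combination (-(-1 : ℝ) ^ k) * hs.d_succ k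
  have := eq_apply_zero_of_forall_succ (u := fun k ↦ (-1) ^ k * d k) hstep n
  rw [zpow_zero, one_mul] at this
  linear_combination (-1 : ℝ) ^ n * this - d n * neg_one_zpow_mul_self (α := ℝ) n

theorem neg_one_zpow_mul_a_succ (hs : LinearizedRecurrence a d c b) (n : ℤ) :
    (-1) ^ (n + 1) * a (n + 1) = (-1) ^ n * a n + 7 / 4 * d 0 := by
  have hd := hs.d_eq (n + 1)
  rw [zpow_add_one₀ (neg_ne_zero.2 one_ne_zero)] at hd ⊢
  linear_combination (-(-1 : ℝ) ^ n) * hs.a_succ n - 7 / 4 * (-1 : ℝ) ^ n * hd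
    + 7 / 4 * d 0 * neg_one_zpow_mul_self (α := ℝ) n

theorem b_add_eight_mul_c_succ (hs : LinearizedRecurrence a d c b) (n : ℤ) :
    b (n + 1) + 8 * c (n + 1) = b n + 8 * c n := by
  linear_combination (-1 : ℝ) * hs.b_succ n + 8 * hs.c_succ n

theorem b_add_eight_mul_c_eq (hs : LinearizedRecurrence a d c b) (n : ℤ) :
    b n + 8 * c n = b 0 + 8 * c 0 :=
  eq_apply_zero_of_forall_succ (u := fun k ↦ b k + 8 * c k) hs.b_add_eight_mul_c_succ n

theorem b_succ_eq (hs : LinearizedRecurrence a d c b) (n : ℤ) :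
    b (n + 1) = b n + -2 * (b 0 + 8 * c 0) := by
  linear_combination hs.b_succ n - 2 * hs.b_add_eight_mul_c_eq n

end LinearizedRecurrence

/-- Bounded solutions of the linearized reduced recurrence
`d_{n+1} + d_n = 0`, `b_{n+1} + b_n + 16c_n = 0`, `a_{n+1} + a_n - (7/4)d_{n+1} = 0`,
`c_{n+1} + c_n + (1/4)b_{n+1} = 0` are exactly
`(a_n, d_n, c_n, b_n) = A((-1)ⁿ, 0, 0, 0) + B(0, 0, -1/8, 1)`. -/
theorem bounded_solutions_linearized_map (a d c b : ℤ → ℝ)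
    (h1 : ∀ n : ℤ, d (n + 1) + d n = 0)
    (h2 : ∀ n : ℤ, b (n + 1) + b n + 16 * c n = 0)
    (h3 : ∀ n : ℤ, a (n + 1) + a n - (7 / 4) * d (n + 1) = 0)
    (h4 : ∀ n : ℤ, c (n + 1) + c n + (1 / 4) * b (n + 1) = 0) :
    (∃ C : ℝ, ∀ n : ℤ, |a n| + |d n| + |c n| + |b n| ≤ C) ↔
      ∃ A B : ℝ, ∀ n : ℤ,
        a n = A * (-1 : ℝ) ^ n ∧ d n = 0 ∧ c n = B * (-1 / 8) ∧ b n = B := by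
  have hs : LinearizedRecurrence a d c b := ⟨h1, h2, h3, h4⟩
  constructor
  · rintro ⟨C, hC⟩
    have hd₀ : 7 / 4 * d 0 = 0 := eq_zero_of_forall_succ_of_norm_le
      (u := fun k ↦ (-1) ^ k * a k) hs.neg_one_zpow_mul_a_succ (C := C) fun n ↦ by
        simp only [Real.norm_eq_abs, abs_mul, abs_neg_one_zpow, one_mul]
        linarith [hC n, abs_nonneg (d n), abs_nonneg (c n), abs_nonneg (b n)]
    have hbc₀ : -2 * (b 0 + 8 * c 0) = 0 := eq_zero_of_forall_succ_of_norm_le hs.b_succ_eq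
      (C := C) fun n ↦ by
        rw [Real.norm_eq_abs]
        linarith [hC n, abs_nonneg (a n), abs_nonneg (d n), abs_nonneg (c n)]
    refine ⟨a 0, b 0, fun n ↦ ⟨?_, ?_, ?_, ?_⟩⟩
    · have ha := eq_add_zsmul_of_forall_succ (u := fun k ↦ (-1) ^ k * a k)
        hs.neg_one_zpow_mul_a_succ n
      rw [hd₀, smul_zero, add_zero, zpow_zero, one_mul] at ha
      linear_combination (-1 : ℝ) ^ n * ha - a n * neg_one_zpow_mul_self (α := ℝ) n
    · rw [hs.d_eq, (mul_eq_zero.1 hd₀).resolve_left (by norm_num), mul_zero]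
    · have hb := eq_add_zsmul_of_forall_succ hs.b_succ_eq n
      rw [hbc₀, smul_zero, add_zero] at hb
      linear_combination hs.b_add_eight_mul_c_eq n / 8 - hb / 8 - hbc₀ / 16
    · simpa [hbc₀] using eq_add_zsmul_of_forall_succ hs.b_succ_eq n
  · rintro ⟨A, B, hAB⟩
    refine ⟨|A| + |B| / 8 + |B|, fun n ↦ ?_⟩
    obtain ⟨ha, hd, hc, hb⟩ := hAB n
    norm_num [ha, hd, hc, hb, abs_mul, div_eq_mul_inv]
end
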